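/- If f : (ZMod p)^n → ZMod (p^k) is a generalized n-plateaued function (i.e. |W_f(a)| = p^n or 0 for every a), then there exist a ∈ (ZMod p)^n and b ∈ ZMod (p^k) such that f(x) = p^{k-1}·(a·x) + b for all x, where a·x ∈ ZMod p is lifted to ZMod (p^k) via the embedding t ↦ t (as an integer in {0,...,p-1}). -/

import Mathlib

/-- The complex primitive `m`-th root of unity `e^{2πi/m}`. -/
noncomputable def zeta (m : ℕ) : ℂ := Complex.exp (2 * Real.pi * Complex.I / m)

lemma zeta_prim (m : ℕ) (hm : m ≠ 0) : IsPrimitiveRoot (zeta m) m := by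
  simpa [zeta] using Complex.isPrimitiveRoot_exp m hm

lemma zeta_abs (m : ℕ) : ‖zeta m‖ = 1 := by
  have h : (2 * (Real.pi:ℂ) * Complex.I / m) = ((2 * Real.pi / m : ℝ):ℂ) * Complex.I := by
    push_cast; ring
  rw [zeta, h, Complex.norm_exp_ofReal_mul_I]

lemma zeta_pow_base (p k : ℕ) (hp : p ≠ 0) (hk : 1 ≤ k) :
    zeta (p ^ k) ^ (p ^ (k-1)) = zeta p := by
  rw [zeta, zeta, ← Complex.exp_nat_mul]
  congr 1
  have h1 : (p:ℂ) ≠ 0 := Nat.cast_ne_zero.mpr hp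
  have h2 : ((p^k : ℕ):ℂ) = (p:ℂ)^(k-1) * p := by
    push_cast
    rw [← pow_succ, Nat.sub_add_cancel hk]
  rw [h2]
  push_cast
  field_simp

section chi
variable (p : ℕ) [Fact (Nat.Prime p)]

lemma p_ne_zero : p ≠ 0 := (Fact.out : Nat.Prime p).ne_zero

noncomputable def chi (v : ZMod p) : ℂ := zeta p ^ v.val

lemma zeta_pow_p : zeta p ^ p = 1 := (zeta_prim p (p_ne_zero p)).pow_eq_one

lemma zeta_pow_mod (A : ℕ) : zeta p ^ (A % p) = zeta p ^ A := by
  conv_rhs => rw [← Nat.mod_add_div A p]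
  rw [pow_add, pow_mul, zeta_pow_p, one_pow, mul_one]

lemma chi_add (u v : ZMod p) : chi p (u + v) = chi p u * chi p v := by
  unfold chi
  rw [ZMod.val_add, zeta_pow_mod, pow_add]

lemma chi_zero : chi p 0 = 1 := by
  haveI : NeZero p := ⟨p_ne_zero p⟩
  simp [chi, ZMod.val_zero]

lemma chi_one : chi p 1 = zeta p := by
  have h2 : 1 < p := (Fact.out : Nat.Prime p).one_lt
  haveI : NeZero p := ⟨p_ne_zero p⟩
  simp [chi, ZMod.val_one]

end chi

/-- Inner product on `(ZMod p)^n`. -/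
def dot {p n : ℕ} (a x : Fin n → ZMod p) : ZMod p := ∑ i, a i * x i

lemma dot_add_left {p n : ℕ} (a c x : Fin n → ZMod p) :
    dot (a + c) x = dot a x + dot c x := by
  simp [dot, add_mul, Finset.sum_add_distrib]

lemma dot_zero_right {p n : ℕ} (a : Fin n → ZMod p) : dot a (0 : Fin n → ZMod p) = 0 := by
  simp [dot]

lemma sum_chi_eq_zero {p n : ℕ} [Fact (Nat.Prime p)] (x : Fin n → ZMod p) (hx : x ≠ 0) :
    ∑ a : Fin n → ZMod p, chi p (-(dot a x)) = 0 := by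
  obtain ⟨j, hj⟩ : ∃ j, x j ≠ 0 := by
    by_contra h; push_neg at h; exact hx (funext h)
  set c : Fin n → ZMod p := Function.update (0 : Fin n → ZMod p) j (-(x j)⁻¹) with hc
  have hdc : dot c x = -1 := by
    rw [dot, Finset.sum_eq_single j]
    · simp [hc, Function.update_self, inv_mul_cancel₀ hj]
    · intro i _ hij; simp [hc, Function.update_of_ne hij]
    · intro h; exact absurd (Finset.mem_univ j) h
  set S := ∑ a : Fin n → ZMod p, chi p (-(dot a x)) with hS
  have hshift : S = ∑ a : Fin n → ZMod p, chi p (-(dot (a + c) x)) :=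
    (Fintype.sum_bijective (· + c) (Equiv.addRight c).bijective _ _ (fun a => rfl)).symm
  have hmul : S = zeta p * S := by
    conv_lhs => rw [hshift]
    conv_rhs => rw [hS, Finset.mul_sum]
    refine Finset.sum_congr rfl fun a _ => ?_
    rw [dot_add_left, hdc, neg_add, chi_add, neg_neg, chi_one, mul_comm]
  have hz1 : zeta p ≠ 1 := by
    have h2 : 1 < p := (Fact.out : Nat.Prime p).one_lt
    exact (zeta_prim p (p_ne_zero p)).ne_one h2
  have h0 : (zeta p - 1) * S = 0 := by linear_combination -hmul
  rcases mul_eq_zero.mp h0 with h | h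
  · exact absurd (sub_eq_zero.mp h) hz1
  · exact h

/-- Walsh transform of a generalized p-ary function `f : (ZMod p)^n → ZMod (p^k)`. -/
noncomputable def walsh (p n k : ℕ) [Fact (Nat.Prime p)]
    (f : (Fin n → ZMod p) → ZMod (p ^ k)) (a : Fin n → ZMod p) : ℂ :=
  ∑ x : Fin n → ZMod p, zeta (p ^ k) ^ (f x).val * zeta p ^ ((-(dot a x)).val)

lemma card_pi (p n : ℕ) [Fact (Nat.Prime p)] :
    Fintype.card (Fin n → ZMod p) = p ^ n := by
  haveI : NeZero p := ⟨p_ne_zero p⟩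
  simp [Fintype.card_fun, ZMod.card]

lemma exists_walsh_ne_zero (p n k : ℕ) [Fact (Nat.Prime p)]
    (f : (Fin n → ZMod p) → ZMod (p ^ k)) : ∃ a, walsh p n k f a ≠ 0 := by
  by_contra h
  push_neg at h
  have hsum : ∑ a : Fin n → ZMod p, walsh p n k f a = 0 := by simp [h]
  have hswap : ∑ a : Fin n → ZMod p, walsh p n k f a
      = ∑ x : Fin n → ZMod p, zeta (p ^ k) ^ (f x).val * ∑ a : Fin n → ZMod p, chi p (-(dot a x)) := by
    simp only [walsh, chi]
    rw [Finset.sum_comm]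
    exact Finset.sum_congr rfl fun x _ => by rw [Finset.mul_sum]
  have heval : ∑ a : Fin n → ZMod p, walsh p n k f a
      = (p:ℂ) ^ n * zeta (p ^ k) ^ (f 0).val := by
    rw [hswap, Finset.sum_eq_single (0 : Fin n → ZMod p)]
    · have : ∀ a : Fin n → ZMod p, chi p (-(dot a (0:Fin n → ZMod p))) = 1 := by
        intro a; rw [dot_zero_right, neg_zero, chi_zero]
      simp only [this, Finset.sum_const, Finset.card_univ, card_pi p n, nsmul_eq_mul, Nat.cast_pow]
      ring
    · intro x _ hx
      rw [sum_chi_eq_zero x hx, mul_zero]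
    · intro hmem; exact absurd (Finset.mem_univ _) hmem
  rw [hsum] at heval
  have hp0 : ((p:ℂ)) ^ n ≠ 0 := pow_ne_zero _ (Nat.cast_ne_zero.mpr (p_ne_zero p))
  have hz0 : zeta (p ^ k) ^ (f 0).val ≠ 0 := pow_ne_zero _ (Complex.exp_ne_zero _)
  exact (mul_ne_zero hp0 hz0) heval.symm

lemma terms_eq (p n k : ℕ) [Fact (Nat.Prime p)]
    (f : (Fin n → ZMod p) → ZMod (p ^ k)) (a : Fin n → ZMod p)
    (hW : ‖walsh p n k f a‖ = (p : ℝ) ^ n) :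
    ∀ x, zeta (p ^ k) ^ (f x).val * zeta p ^ ((-(dot a x)).val)
      = walsh p n k f a / (p:ℂ) ^ n := by
  set W := walsh p n k f a with hWdef
  set T : (Fin n → ZMod p) → ℂ := fun x => zeta (p ^ k) ^ (f x).val * zeta p ^ ((-(dot a x)).val) with hT
  set r : ℝ := (p:ℝ) ^ n with hr
  have hr0 : r ≠ 0 := pow_ne_zero _ (Nat.cast_ne_zero.mpr (p_ne_zero p))
  have hNr : ((p:ℂ)) ^ n = ((r:ℝ):ℂ) := by rw [hr]; push_cast; ring
  set c : ℂ := W / (p:ℂ) ^ n with hcdef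
  have habsT : ∀ x, ‖T x‖ = 1 := by
    intro x
    rw [hT]
    simp [norm_mul, norm_pow, zeta_abs]
  have hnormT : ∀ x, Complex.normSq (T x) = 1 := by
    intro x; rw [Complex.normSq_eq_norm_sq, habsT]; norm_num
  have hnormc : Complex.normSq c = 1 := by
    rw [Complex.normSq_eq_norm_sq, hcdef, norm_div, hW, hNr]
    simp [Complex.norm_real, abs_of_nonneg, ← hr]
    rw [abs_of_nonneg (by positivity : (0:ℝ) ≤ r)]
    field_simp
    simp
  have hWc : (W * (starRingEnd ℂ) c).re = r := by
    have h1 : W * (starRingEnd ℂ) c = ((Complex.normSq W : ℝ):ℂ) / ((r:ℝ):ℂ) := by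
      rw [hcdef, map_div₀, hNr]
      rw [Complex.conj_ofReal]
      rw [← mul_div_assoc, Complex.mul_conj]
    have h2 : Complex.normSq W = r ^ 2 := by
      rw [Complex.normSq_eq_norm_sq, hW, hr]
    rw [h1, h2, ← Complex.ofReal_div, Complex.ofReal_re]
    field_simp
  have hsum0 : ∑ x : Fin n → ZMod p, Complex.normSq (T x - c) = 0 := by
    have hexp : ∀ x : Fin n → ZMod p, Complex.normSq (T x - c)
        = 1 + 1 - 2 * (T x * (starRingEnd ℂ) c).re := by
      intro x
      rw [Complex.normSq_sub, hnormT, hnormc]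
    simp only [hexp]
    rw [Finset.sum_sub_distrib, Finset.sum_const, ← Finset.mul_sum, ← Complex.re_sum, ← Finset.sum_mul]
    have : ∑ x : Fin n → ZMod p, T x = W := rfl
    rw [this, hWc, Finset.card_univ, card_pi p n]
    simp only [hr, nsmul_eq_mul, Nat.cast_pow]
    ring
  intro x
  have hx : Complex.normSq (T x - c) = 0 := by
    have hnn : ∀ y ∈ (Finset.univ : Finset (Fin n → ZMod p)), 0 ≤ Complex.normSq (T y - c) :=
      fun y _ => Complex.normSq_nonneg _
    exact (Finset.sum_eq_zero_iff_of_nonneg hnn).mp hsum0 x (Finset.mem_univ x)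
  have := Complex.normSq_eq_zero.mp hx
  have := sub_eq_zero.mp this
  exact this

lemma lift_add (p k : ℕ) [Fact (Nat.Prime p)] (hk : 1 ≤ k) (u v : ZMod p) :
    (p : ZMod (p^k))^(k-1) * (((u+v).val : ℕ) : ZMod (p^k))
    = (p : ZMod (p^k))^(k-1) * ((u.val : ℕ) : ZMod (p^k))
      + (p : ZMod (p^k))^(k-1) * ((v.val : ℕ) : ZMod (p^k)) := by
  have hpk : (p : ZMod (p^k))^(k-1) * (p : ZMod (p^k)) = 0 := by
    rw [← pow_succ, Nat.sub_add_cancel hk, ← Nat.cast_pow, ZMod.natCast_self]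
  have hval : (u+v).val + p * ((u.val + v.val)/p) = u.val + v.val := by
    rw [ZMod.val_add]; exact Nat.mod_add_div _ _
  have hcast := congrArg (Nat.cast : ℕ → ZMod (p^k)) hval
  push_cast at hcast
  linear_combination ((p : ZMod (p^k))^(k-1)) * hcast
    - ((((u.val + v.val)/p : ℕ) : ZMod (p^k))) * hpk

lemma lift_neg (p k : ℕ) [Fact (Nat.Prime p)] (hk : 1 ≤ k) (v : ZMod p) :
    (p : ZMod (p^k))^(k-1) * (((-v).val : ℕ) : ZMod (p^k))
    = -((p : ZMod (p^k))^(k-1) * ((v.val : ℕ) : ZMod (p^k))) := by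
  haveI : NeZero p := ⟨p_ne_zero p⟩
  have h := lift_add p k hk (-v) v
  rw [neg_add_cancel] at h
  simp only [ZMod.val_zero, Nat.cast_zero, mul_zero] at h
  linear_combination -h

lemma zeta_ne_zero (m : ℕ) : zeta m ≠ 0 := by rw [zeta]; exact Complex.exp_ne_zero _

lemma zeta_pow_modEq {m A B : ℕ} (hm : m ≠ 0) (h : zeta m ^ A = zeta m ^ B) :
    A ≡ B [MOD m] := by
  have key : ∀ {A B : ℕ}, B ≤ A → zeta m ^ A = zeta m ^ B → B ≡ A [MOD m] := by
    intro A B hle h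
    have h1 : zeta m ^ B * zeta m ^ (A - B) = zeta m ^ B * 1 := by
      rw [← pow_add, Nat.add_sub_cancel' hle, h, mul_one]
    have h2 := mul_left_cancel₀ (pow_ne_zero B (zeta_ne_zero m)) h1
    have h3 : m ∣ A - B := ((zeta_prim m hm).pow_eq_one_iff_dvd _).mp h2
    exact (Nat.modEq_iff_dvd' hle).mpr h3
  rcases le_total B A with hle | hle
  · exact (key hle h).symm
  · exact key hle h.symm

theorem stmt3 (p n k : ℕ) [Fact (Nat.Prime p)] (hn : 1 ≤ n) (hk : 1 ≤ k)
    (f : (Fin n → ZMod p) → ZMod (p ^ k))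
    (hf : ∀ a, ‖walsh p n k f a‖ = (p : ℝ) ^ (n : ℕ) ∨ walsh p n k f a = 0) :
    ∃ (a : Fin n → ZMod p) (b : ZMod (p ^ k)), ∀ x,
      f x = (p : ZMod (p ^ k)) ^ (k - 1) * (((dot a x).val : ℕ) : ZMod (p ^ k)) + b := by
  haveI : NeZero p := ⟨p_ne_zero p⟩
  have hpk : (p ^ k : ℕ) ≠ 0 := pow_ne_zero _ (p_ne_zero p)
  obtain ⟨a, ha⟩ := exists_walsh_ne_zero p n k f
  have hW : ‖walsh p n k f a‖ = (p : ℝ) ^ n := (hf a).resolve_right ha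
  have hterm := terms_eq p n k f a hW
  refine ⟨a, f 0, fun x => ?_⟩
  have hx := (hterm x).trans (hterm 0).symm
  have h0 : zeta (p ^ k) ^ (f 0).val * zeta p ^ ((-(dot a (0 : Fin n → ZMod p))).val)
      = zeta (p ^ k) ^ (f 0).val := by
    rw [dot_zero_right, neg_zero, ZMod.val_zero, pow_zero, mul_one]
  rw [h0] at hx
  rw [← zeta_pow_base p k (p_ne_zero p) hk, ← pow_mul, ← pow_add] at hx
  have hmod : (f x).val + p ^ (k-1) * (-(dot a x)).val ≡ (f 0).val [MOD p ^ k] := by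
    exact zeta_pow_modEq hpk hx
  have hzm := (ZMod.natCast_eq_natCast_iff _ _ _).mpr hmod
  rw [Nat.cast_add, Nat.cast_mul, Nat.cast_pow, ZMod.natCast_val (f x), ZMod.cast_id,
    ZMod.natCast_val (f 0), ZMod.cast_id] at hzm
  have hneg := lift_neg p k hk (dot a x)
  linear_combination hzm - hneg
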